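/- The class of languages accepted by quasi-deterministic sensing 5'→3' WK automata is not closed under union: there exist languages L₁ and L₂, each accepted by a quasi-deterministic sensing 5'→3' WK automaton (namely L₁ = { aⁿbⁿ : n ≥ 0 } and L₂ = { aⁿb²ⁿ : n ≥ 0 }), such that L₁ ∪ L₂ is not accepted by any quasi-deterministic sensing 5'→3' WK automaton. -/

import Mathlib

open Computability

/-- The two-letter alphabet `{a, b}`. -/
inductive Letter : Type
  | a : Letter
  | b : Letter
deriving DecidableEq

instance instFintypeLetter : Fintype Letter :=
  ⟨{Letter.a, Letter.b}, fun x => by cases x <;> simp⟩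

open Letter

/-- A sensing 5'→3' Watson-Crick automaton over the alphabet `T` with state set `Q`:
an initial state `q0`, a set `F` of final states, and a transition mapping
`δ : Q × T* × T* → 2^Q` that is nonempty for only finitely many triples. -/
structure WKAutomaton (T : Type) (Q : Type) where
  q0 : Q
  F : Set Q
  δ : Q → List T → List T → Set Q
  finite_delta : {t : Q × List T × List T | (δ t.1 t.2.1 t.2.2).Nonempty}.Finite

namespace WKAutomaton

variable {T Q : Type}

/-- One computation step on configurations:
`(q, x ++ w' ++ y) ⇒ (q', w')` iff `q' ∈ δ q x y`. -/
def Step (A : WKAutomaton T Q) (c c' : Q × List T) : Prop :=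
  ∃ x y : List T, c.2 = x ++ c'.2 ++ y ∧ c'.1 ∈ A.δ c.1 x y

/-- The accepted language: words `w` with `(q₀, w) ⇒* (q_F, λ)` for some final `q_F`. -/
def Lang (A : WKAutomaton T Q) : Set (List T) :=
  {w | ∃ qf ∈ A.F, Relation.ReflTransGen A.Step (A.q0, w) (qf, [])}

/-- `A` is deterministic: in every configuration at most one computation step
(choice of `x`, `y`, `w'`, `q'`) is applicable. -/
def Deterministic (A : WKAutomaton T Q) : Prop :=
  ∀ (q : Q) (w x₁ y₁ w₁ x₂ y₂ w₂ : List T) (q₁ q₂ : Q),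
    w = x₁ ++ w₁ ++ y₁ → q₁ ∈ A.δ q x₁ y₁ →
    w = x₂ ++ w₂ ++ y₂ → q₂ ∈ A.δ q x₂ y₂ →
    x₁ = x₂ ∧ y₁ = y₂ ∧ w₁ = w₂ ∧ q₁ = q₂

/-- `A` is quasi-deterministic: for every configuration `(q,w)`, whenever
`(q,w) ⇒ (p,u)` and `(q,w) ⇒ (r,v)`, it holds that `p = r`. -/
def QuasiDet (A : WKAutomaton T Q) : Prop :=
  ∀ (q : Q) (w : List T) (p r : Q) (u v : List T),
    A.Step (q, w) (p, u) → A.Step (q, w) (r, v) → p = r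

/-- `A` is state-deterministic: for every state `q` there is at most one state `p`
with `p ∈ δ(q,u,v)` for some words `u`, `v`. -/
def StateDet (A : WKAutomaton T Q) : Prop :=
  ∀ (q p₁ p₂ : Q) (u₁ v₁ u₂ v₂ : List T),
    p₁ ∈ A.δ q u₁ v₁ → p₂ ∈ A.δ q u₂ v₂ → p₁ = p₂

/-- `A` is stateless: `Q = F = {q₀}`. -/
def Stateless (A : WKAutomaton T Q) : Prop :=
  (∀ q : Q, q = A.q0) ∧ A.F = {A.q0}

/-- `A` is all-final: `Q = F`. -/
def AllFinal (A : WKAutomaton T Q) : Prop := A.F = Set.univ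

/-- `A` is simple: at most one head reads in each step. -/
def Simple (A : WKAutomaton T Q) : Prop :=
  ∀ (q : Q) (u v : List T), (A.δ q u v).Nonempty → u = [] ∨ v = []

/-- `A` is 1-limited: exactly one letter is read in each step. -/
def OneLimited (A : WKAutomaton T Q) : Prop :=
  ∀ (q : Q) (u v : List T), (A.δ q u v).Nonempty →
    (u = [] ∧ v.length = 1) ∨ (u.length = 1 ∧ v = [])

end WKAutomaton

/-- Equality of languages modulo the empty word. -/
def EqModLambda {T : Type} (L₁ L₂ : Set (List T)) : Prop :=
  ∀ w : List T, w ≠ [] → (w ∈ L₁ ↔ w ∈ L₂)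

/-- `L` is accepted (modulo the empty word) by some sensing 5'→3' WK automaton
with a finite state set satisfying the property `P`. -/
def AcceptsWith (T : Type) (P : ∀ Q : Type, WKAutomaton T Q → Prop)
    (L : Set (List T)) : Prop :=
  ∃ (Q : Type) (_ : Finite Q) (A : WKAutomaton T Q), P Q A ∧ EqModLambda A.Lang L

/-- The language `{ aⁿbⁿ : n ≥ 0 }`. -/
def Lanbn : Set (List Letter) :=
  {w | ∃ n : ℕ, w = List.replicate n a ++ List.replicate n b}

/-- The language `{ aⁿb²ⁿ : n ≥ 0 }`. -/
def Lanb2n : Set (List Letter) :=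
  {w | ∃ n : ℕ, w = List.replicate n a ++ List.replicate (2 * n) b}

/-!
Let every transition read at most `k` letters. While both blocks of `aᵖbᵠ` are longer than `k`,
a run reads only `a`s on the left and `b`s on the right, and quasi-determinism makes the next
state independent of how much is read. So accepting runs on `aᴺbᴺ` and on `aᴺb²ᴺ` pass through
the same states for as long as both read blockwise. A loop at such a common state reading `aᴵ`
and `bᴶ` can be pumped into either run, and `aᴺ⁺ᴵbᴺ⁺ᴶ`, `aᴺ⁺ᴵb²ᴺ⁺ᴶ` both lying in `L₁ ∪ L₂`
forces `I = J = 0`. Cutting out these loops, the shorter run reads at most `k·|Q|` letters before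
one of its blocks is down to `k` letters, which is impossible once `N > k·|Q| + k`.

`L₁` and `L₂` themselves are accepted by one-state automata peeling `a`, `b` (resp. `a`, `bb`)
off the two ends.
-/

open Relation List

namespace WKAutomaton

variable {T Q : Type}

def Accepts (A : WKAutomaton T Q) (c : Q × List T) : Prop :=
  ∃ f ∈ A.F, ReflTransGen A.Step c (f, [])

theorem Accepts.of_reflTransGen {A : WKAutomaton T Q} {c c' : Q × List T}
    (h : ReflTransGen A.Step c c') (hc' : A.Accepts c') : A.Accepts c :=
  let ⟨f, hf, hrun⟩ := hc'
  ⟨f, hf, h.trans hrun⟩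

theorem quasiDet_of_subsingleton [Subsingleton Q] (A : WKAutomaton T Q) : A.QuasiDet :=
  fun _ _ _ _ _ _ _ _ => Subsingleton.elim _ _

def ReadsAtMost (A : WKAutomaton T Q) (k : ℕ) : Prop :=
  ∀ q x y, (A.δ q x y).Nonempty → x.length + y.length ≤ k

theorem exists_readsAtMost (A : WKAutomaton T Q) : ∃ k, A.ReadsAtMost k := by
  obtain ⟨k, hk⟩ := (A.finite_delta.image fun t => t.2.1.length + t.2.2.length).bddAbove
  exact ⟨k, fun q x y h => hk ⟨(q, x, y), h, rfl⟩⟩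

def peel (u v : List T) : WKAutomaton T Unit where
  q0 := ()
  F := Set.univ
  δ _ x y := {_q | x = u ∧ y = v}
  finite_delta := (Set.finite_singleton ((), u, v)).subset <| by
    rintro ⟨⟨⟩, x, y⟩ ⟨_, rfl, rfl⟩
    rfl

theorem lang_peel (u v : List T) :
    (peel u v).Lang = {w | ∃ n, w = (replicate n u).flatten ++ (replicate n v).flatten} := by
  ext w
  constructor
  · rintro ⟨⟨⟩, -, h⟩
    suffices ∀ c, ReflTransGen (peel u v).Step c ((), []) →
        ∃ n, c.2 = (replicate n u).flatten ++ (replicate n v).flatten from this _ h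
    intro c hc
    induction hc using ReflTransGen.head_induction_on with
    | refl => exact ⟨0, rfl⟩
    | head hstep _ ih =>
      obtain ⟨n, hn⟩ := ih
      obtain ⟨x, y, hw, rfl, rfl⟩ := hstep
      refine ⟨n + 1, ?_⟩
      rw [hw, hn, replicate_succ, replicate_succ']
      simp
  · rintro ⟨n, rfl⟩
    refine ⟨(), trivial, ?_⟩
    induction n with
    | zero => exact .refl
    | succ n ih =>
      refine .head ⟨u, v, ?_, rfl, rfl⟩ ih
      rw [replicate_succ, replicate_succ']
      simp

theorem acceptsWith_quasiDet_lang_peel (u v : List T) :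
    AcceptsWith T (fun _ A => A.QuasiDet) (peel u v).Lang :=
  ⟨Unit, inferInstance, peel u v, quasiDet_of_subsingleton _, fun _ _ => Iff.rfl⟩

end WKAutomaton

def ab (p q : ℕ) : List Letter := replicate p a ++ replicate q b

theorem ab_add (i p j q : ℕ) : ab (i + p) (j + q) = replicate i a ++ ab p q ++ replicate j b := by
  rw [Nat.add_comm j q]
  simp only [ab, replicate_add, append_assoc]

theorem ab_ne_nil {p : ℕ} (hp : 0 < p) (q : ℕ) : ab p q ≠ [] := by
  simp [ab, hp.ne']

theorem ab_inj {p q p' q' : ℕ} : ab p q = ab p' q' ↔ p = p' ∧ q = q' := by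
  refine ⟨fun h => ?_, by rintro ⟨rfl, rfl⟩; rfl⟩
  have ha := congrArg (count a) h
  have hb := congrArg (count b) h
  simp [ab, count_replicate] at ha hb
  exact ⟨ha, hb⟩

theorem eq_of_ab_eq_append {i j p q : ℕ} {x w y : List Letter}
    (h : ab (i + p) (j + q) = x ++ w ++ y) (hx : x.length = i) (hy : y.length = j) :
    x = replicate i a ∧ y = replicate j b ∧ w = ab p q := by
  rw [ab_add] at h
  obtain ⟨hxw, rfl⟩ := append_inj' h.symm (by simp [hy])
  obtain ⟨rfl, rfl⟩ := append_inj hxw (by simp [hx])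
  exact ⟨rfl, rfl, rfl⟩

theorem ab_mem_lanbn_union_lanb2n_iff {p q : ℕ} :
    ab p q ∈ Lanbn ∪ Lanb2n ↔ q = p ∨ q = 2 * p := by
  change (∃ n, ab p q = ab n n) ∨ (∃ n, ab p q = ab n (2 * n)) ↔ _
  simp [ab_inj]

theorem lanbn_eq_lang_peel : Lanbn = (WKAutomaton.peel [a] [b]).Lang := by
  rw [WKAutomaton.lang_peel]
  simp [Lanbn]

theorem lanb2n_eq_lang_peel : Lanb2n = (WKAutomaton.peel [a] [b, b]).Lang := by
  have h (n : ℕ) : (replicate n [b, b]).flatten = replicate (2 * n) b := by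
    rw [show [b, b] = replicate 2 b from rfl, flatten_replicate_replicate, Nat.mul_comm]
  simp [WKAutomaton.lang_peel, Lanb2n, h]

namespace WKAutomaton

variable {Q : Type} (A : WKAutomaton Letter Q)

/-- `A.BlockRun s n i j t`: an `n`-step run from `s` to `t` whose left head reads only `a`s,
`i` in total, and whose right head reads only `b`s, `j` in total. -/
inductive BlockRun : Q → ℕ → ℕ → ℕ → Q → Prop
  | refl (s : Q) : BlockRun s 0 0 0 s
  | head {s t u : Q} {n i j I J : ℕ} :
      t ∈ A.δ s (replicate i a) (replicate j b) → BlockRun t n I J u →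
      BlockRun s (n + 1) (i + I) (j + J) u

variable {A}

theorem step_ab {s t : Q} {i j : ℕ} (h : t ∈ A.δ s (replicate i a) (replicate j b)) (p q : ℕ) :
    A.Step (s, ab (i + p) (j + q)) (t, ab p q) :=
  ⟨_, _, ab_add i p j q, h⟩

theorem QuasiDet.eq_of_mem_delta (hA : A.QuasiDet) {s t₁ t₂ : Q} {i₁ j₁ i₂ j₂ : ℕ}
    (h₁ : t₁ ∈ A.δ s (replicate i₁ a) (replicate j₁ b))
    (h₂ : t₂ ∈ A.δ s (replicate i₂ a) (replicate j₂ b)) : t₁ = t₂ := by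
  refine hA s _ _ _ _ (ab i₁ j₁) (step_ab h₁ i₂ j₂) ?_
  rw [Nat.add_comm i₁, Nat.add_comm j₁]
  exact step_ab h₂ i₁ j₁

namespace BlockRun

variable {s t u : Q} {m n I J I' J' : ℕ}

theorem trans (h₁ : A.BlockRun s m I J t) (h₂ : A.BlockRun t n I' J' u) :
    A.BlockRun s (m + n) (I + I') (J + J') u := by
  induction h₁ with
  | refl => simpa using h₂
  | head hst _ ih =>
    convert BlockRun.head hst (ih h₂) using 1 <;> omega

theorem exists_split (h : A.BlockRun s (m + n) I J u) :
    ∃ t I₁ J₁ I₂ J₂, A.BlockRun s m I₁ J₁ t ∧ A.BlockRun t n I₂ J₂ u ∧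
      I = I₁ + I₂ ∧ J = J₁ + J₂ := by
  induction m generalizing s I J with
  | zero => exact ⟨s, 0, 0, I, J, .refl s, by simpa using h, by simp, by simp⟩
  | succ m ih =>
    rw [Nat.add_right_comm] at h
    obtain _ | ⟨hst, hrest⟩ := h
    obtain ⟨t, I₁, J₁, I₂, J₂, h₁, h₂, rfl, rfl⟩ := ih hrest
    exact ⟨t, _, _, I₂, J₂, .head hst h₁, h₂, by omega, by omega⟩

theorem steps (h : A.BlockRun s n I J t) (p q : ℕ) :
    ReflTransGen A.Step (s, ab (I + p) (J + q)) (t, ab p q) := by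
  induction h generalizing p q with
  | refl => simpa using .refl
  | head hst _ ih =>
    rw [Nat.add_assoc, Nat.add_assoc]
    exact .head (step_ab hst _ _) (ih p q)

theorem add_le_mul {k : ℕ} (hk : A.ReadsAtMost k) (h : A.BlockRun s n I J t) :
    I + J ≤ k * n := by
  induction h with
  | refl => simp
  | head hst _ ih =>
    have := hk _ _ _ ⟨_, hst⟩
    simp only [length_replicate] at this
    rw [Nat.mul_succ]
    omega

theorem target_eq (hA : A.QuasiDet) (h : A.BlockRun s n I J t) (h' : A.BlockRun s n I' J' u) :
    t = u := by
  induction h generalizing I' J' with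
  | refl => cases h'; rfl
  | head hst _ ih =>
    obtain _ | ⟨hst', hrest'⟩ := h'
    exact ih (hA.eq_of_mem_delta hst' hst ▸ hrest')

theorem exists_cycle [Fintype Q] (hA : A.QuasiDet) (h : A.BlockRun s n I J t)
    (hn : Fintype.card Q < n) :
    ∃ m c d u I₁ J₁ I₂ J₂ I₃ J₃, n = m + c + d ∧ 0 < c ∧ A.BlockRun s m I₁ J₁ u ∧
      A.BlockRun u c I₂ J₂ u ∧ A.BlockRun u d I₃ J₃ t ∧ I = I₁ + I₂ + I₃ ∧ J = J₁ + J₂ + J₃ := by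
  have hprefix (m : Fin (n + 1)) : ∃ u I₁ J₁, A.BlockRun s m I₁ J₁ u := by
    obtain ⟨d, hd⟩ := Nat.exists_eq_add_of_le (Nat.le_of_lt_succ m.2)
    obtain ⟨u, I₁, J₁, -, -, h₁, -⟩ := (hd ▸ h).exists_split
    exact ⟨u, I₁, J₁, h₁⟩
  choose f _ _ hf using hprefix
  obtain ⟨i, j, hne, hij⟩ :=
    Fintype.exists_ne_map_eq_of_card_lt f (by simpa using Nat.lt_succ_of_lt hn)
  wlog hlt : i < j generalizing i j
  · exact this j i hne.symm hij.symm (lt_of_le_of_ne (not_lt.mp hlt) hne.symm)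
  obtain ⟨c, hc⟩ := Nat.exists_eq_add_of_lt hlt
  obtain ⟨d, hd⟩ := Nat.exists_eq_add_of_le (Nat.le_of_lt_succ j.2)
  rw [hd, hc, Nat.add_assoc i, Nat.add_assoc i] at h
  obtain ⟨u, I₁, J₁, I', J', h₁, h', rfl, rfl⟩ := h.exists_split
  obtain ⟨v, I₂, J₂, I₃, J₃, h₂, h₃, rfl, rfl⟩ := h'.exists_split
  have hu : u = f i := target_eq hA h₁ (hf i)
  have hv : v = f j := target_eq hA (hc ▸ h₁.trans h₂) (hf j)
  obtain rfl : v = u := hv.trans (hij.symm.trans hu.symm)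
  exact ⟨i, c + 1, d, v, I₁, J₁, I₂, J₂, I₃, J₃, by omega, by omega, h₁, h₂, h₃, by omega,
    by omega⟩

theorem add_le_mul_card [Fintype Q] {k : ℕ} (hA : A.QuasiDet) (hk : A.ReadsAtMost k)
    (hcyc : ∀ m v I₁ J₁ c I₂ J₂, m ≤ n → A.BlockRun s m I₁ J₁ v → A.BlockRun v c I₂ J₂ v →
      I₂ + J₂ = 0)
    (h : A.BlockRun s n I J t) : I + J ≤ k * Fintype.card Q := by
  induction n using Nat.strong_induction_on generalizing I J with
  | _ n ih =>
  by_cases hn : n ≤ Fintype.card Q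
  · exact (h.add_le_mul hk).trans (Nat.mul_le_mul_left k hn)
  obtain ⟨m, c, d, u, I₁, J₁, I₂, J₂, I₃, J₃, rfl, hc, h₁, h₂, h₃, rfl, rfl⟩ :=
    h.exists_cycle hA (by omega)
  have hloop := hcyc m u _ _ _ _ _ (by omega) h₁ h₂
  have := ih (m + d) (by omega) (fun m' v _ _ _ _ _ hm' => hcyc m' v _ _ _ _ _ (by omega))
    (h₁.trans h₃)
  omega

end BlockRun

theorem Accepts.exists_blockRun {k : ℕ} (hk : A.ReadsAtMost k) {s : Q} {p q : ℕ}
    (h : A.Accepts (s, ab p q)) :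
    ∃ n I J t p' q', A.BlockRun s n I J t ∧ p = I + p' ∧ q = J + q' ∧ (p' ≤ k ∨ q' ≤ k) ∧
      A.Accepts (t, ab p' q') := by
  obtain ⟨f, hf, hrun⟩ := h
  suffices ∀ c, ReflTransGen A.Step c (f, []) → ∀ s p q, c = (s, ab p q) →
      ∃ n I J t p' q', A.BlockRun s n I J t ∧ p = I + p' ∧ q = J + q' ∧ (p' ≤ k ∨ q' ≤ k) ∧
        ReflTransGen A.Step (t, ab p' q') (f, []) by
    obtain ⟨n, I, J, t, p', q', hr, hp, hq, hsmall, hrest⟩ := this _ hrun s p q rfl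
    exact ⟨n, I, J, t, p', q', hr, hp, hq, hsmall, f, hf, hrest⟩
  intro c hc
  induction hc using ReflTransGen.head_induction_on with
  | refl =>
    rintro s p q hc
    have hnil : ab p q = [] := (congrArg Prod.snd hc).symm
    simp only [ab, append_eq_nil_iff, replicate_eq_nil_iff] at hnil
    exact ⟨0, 0, 0, s, p, q, .refl s, by omega, by omega, by omega, hc ▸ .refl⟩
  | head hstep hrest ih =>
    rintro s p q rfl
    by_cases hsmall : p ≤ k ∨ q ≤ k
    · exact ⟨0, 0, 0, s, p, q, .refl s, by omega, by omega, hsmall, .head hstep hrest⟩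
    obtain ⟨x, y, hw, hδ⟩ := hstep
    have hxy := hk _ _ _ ⟨_, hδ⟩
    obtain ⟨p₁, rfl⟩ : ∃ p₁, p = x.length + p₁ := ⟨p - x.length, by omega⟩
    obtain ⟨q₁, rfl⟩ : ∃ q₁, q = y.length + q₁ := ⟨q - y.length, by omega⟩
    obtain ⟨hx, hy, hw'⟩ := eq_of_ab_eq_append hw rfl rfl
    rw [hx, hy] at hδ
    obtain ⟨n, I, J, t, p', q', hr, rfl, rfl, hsmall', hrest'⟩ := ih _ p₁ q₁ (Prod.ext rfl hw')
    exact ⟨n + 1, _, _, t, p', q', .head hδ hr, by omega, by omega, hsmall', hrest'⟩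

/-- `u` is reached, reading blockwise, on some accepting run of `A` on `aᴺbᴹ`. -/
def Visits (A : WKAutomaton Letter Q) (N M : ℕ) (u : Q) : Prop :=
  ∃ m I J p q, A.BlockRun A.q0 m I J u ∧ N = I + p ∧ M = J + q ∧ A.Accepts (u, ab p q)

theorem BlockRun.visits (hA : A.QuasiDet) {N M n m I J I' J' p q : ℕ} {t u : Q}
    (h : A.BlockRun A.q0 n I J t) (hN : N = I + p) (hM : M = J + q)
    (hacc : A.Accepts (t, ab p q)) (hu : A.BlockRun A.q0 m I' J' u) (hm : m ≤ n) :
    A.Visits N M u := by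
  obtain ⟨d, rfl⟩ := Nat.exists_eq_add_of_le hm
  obtain ⟨v, I₁, J₁, I₂, J₂, h₁, h₂, rfl, rfl⟩ := h.exists_split
  obtain rfl := target_eq hA h₁ hu
  exact ⟨m, I₁, J₁, I₂ + p, J₂ + q, h₁, by omega, by omega, .of_reflTransGen (h₂.steps p q) hacc⟩

theorem Visits.mem_lang {N M c I J : ℕ} {u : Q} (hv : A.Visits N M u)
    (hc : A.BlockRun u c I J u) : ab (N + I) (M + J) ∈ A.Lang := by
  obtain ⟨m, I₀, J₀, p, q, h, rfl, rfl, hacc⟩ := hv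
  rw [Nat.add_right_comm I₀, Nat.add_right_comm J₀]
  exact Accepts.of_reflTransGen ((h.trans hc).steps p q) hacc

theorem BlockRun.add_eq_zero_of_visits (hL : EqModLambda A.Lang (Lanbn ∪ Lanb2n))
    {N c I J : ℕ} {u : Q} (hN : 0 < N) (h₁ : A.Visits N N u) (h₂ : A.Visits N (2 * N) u)
    (hc : A.BlockRun u c I J u) : I + J = 0 := by
  have hmem {p q : ℕ} (hp : 0 < p) (h : ab p q ∈ A.Lang) : q = p ∨ q = 2 * p :=
    ab_mem_lanbn_union_lanb2n_iff.mp ((hL _ (ab_ne_nil hp q)).mp h)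
  have := hmem (by omega) (h₁.mem_lang hc)
  have := hmem (by omega) (h₂.mem_lang hc)
  omega

end WKAutomaton

theorem not_acceptsWith_quasiDet_lanbn_union_lanb2n :
    ¬ AcceptsWith Letter (fun _ A => A.QuasiDet) (Lanbn ∪ Lanb2n) := by
  rintro ⟨Q, _, A, hA, hL⟩
  have := Fintype.ofFinite Q
  obtain ⟨k, hk⟩ := A.exists_readsAtMost
  set N := k * Fintype.card Q + k + 1
  have hacc (M : ℕ) (hM : M = N ∨ M = 2 * N) : A.Accepts (A.q0, ab N M) :=
    (hL _ (ab_ne_nil (by omega) M)).mpr (ab_mem_lanbn_union_lanb2n_iff.mpr hM)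
  obtain ⟨n₁, I₁, J₁, t₁, p₁, q₁, h₁, hN₁, hM₁, hsmall₁, hacc₁⟩ :=
    (hacc N (.inl rfl)).exists_blockRun hk
  obtain ⟨n₂, I₂, J₂, t₂, p₂, q₂, h₂, hN₂, hM₂, hsmall₂, hacc₂⟩ :=
    (hacc (2 * N) (.inr rfl)).exists_blockRun hk
  have hcyc : ∀ m u I J c I' J', m ≤ min n₁ n₂ → A.BlockRun A.q0 m I J u →
      A.BlockRun u c I' J' u → I' + J' = 0 := fun m u _ _ _ _ _ hm hu hc =>
    hc.add_eq_zero_of_visits hL (by omega) (h₁.visits hA hN₁ hM₁ hacc₁ hu (by omega))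
      (h₂.visits hA hN₂ hM₂ hacc₂ hu (by omega))
  rcases le_total n₁ n₂ with hn | hn
  · have := h₁.add_le_mul_card hA hk fun m u _ _ _ _ _ hm => hcyc m u _ _ _ _ _ (by omega)
    omega
  · have := h₂.add_le_mul_card hA hk fun m u _ _ _ _ _ hm => hcyc m u _ _ _ _ _ (by omega)
    omega

/-- The class of languages accepted by quasi-deterministic sensing 5'→3' WK
automata is not closed under union: `L₁ = { aⁿbⁿ }` and `L₂ = { aⁿb²ⁿ }` are
each accepted by a quasi-deterministic sensing 5'→3' WK automaton, but
`L₁ ∪ L₂` is not. -/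
theorem quasiDet_not_closed_under_union :
    AcceptsWith Letter (fun _ A => A.QuasiDet) Lanbn ∧
    AcceptsWith Letter (fun _ A => A.QuasiDet) Lanb2n ∧
    ¬ AcceptsWith Letter (fun _ A => A.QuasiDet) (Lanbn ∪ Lanb2n) :=
  ⟨lanbn_eq_lang_peel ▸ WKAutomaton.acceptsWith_quasiDet_lang_peel _ _,
    lanb2n_eq_lang_peel ▸ WKAutomaton.acceptsWith_quasiDet_lang_peel _ _,
    not_acceptsWith_quasiDet_lanbn_union_lanb2n⟩
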